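/- arXiv:0811.4318 — 6 statements merged into one kernel-verified Lean document; each statement's English description precedes it below -/
import Mathlib

section
/- For every μ > 0, the function κ ↦ S_f(μ, κ) = κ - log(κ/μ) + log Γ(κ) - (κ - 1)ψ(κ) is differentiable on (0, ∞) and its derivative at every κ > 0 equals -((κ - 1)(κ ψ'(κ) - 1))/κ, where ψ' is the derivative of the digamma function. -/
/-- The digamma function `ψ = Γ'/Γ`. -/
noncomputable def digamma (x : ℝ) : ℝ := deriv Real.Gamma x / Real.Gamma x

/-- The trigamma function `ψ'`, the derivative of the digamma function. -/
noncomputable def trigamma (x : ℝ) : ℝ := deriv digamma x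

/-- Shannon entropy of the gamma density with mean `μ` and shape `κ`. -/
noncomputable def gammaEntropy (μ κ : ℝ) : ℝ :=
  κ - Real.log (κ / μ) + Real.log (Real.Gamma κ) - (κ - 1) * digamma κ

/-! Since `1/Γ` is entire and `Γ` has no zeros, `Γ` is smooth away from the nonpositive integers,
and hence so is `ψ = Γ'/Γ`. Differentiating the entropy term by term, the `ψ(κ)` coming from
`log Γ(κ)` cancels the one from `(κ - 1) ψ(κ)`, leaving `1 - 1/κ - (κ - 1) ψ'(κ)`. -/

theorem Complex.contDiffAt_Gamma {s : ℂ} (hs : ∀ m : ℕ, s ≠ -m) (n : WithTop ℕ∞) :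
    ContDiffAt ℂ n Complex.Gamma s := by
  have h := (Complex.differentiable_one_div_Gamma.contDiff (n := n)).contDiffAt (x := s)
  simpa only [Pi.inv_def, inv_inv] using h.inv (inv_ne_zero (Complex.Gamma_ne_zero hs))

theorem Real.contDiffAt_Gamma {x : ℝ} (hx : ∀ m : ℕ, x ≠ -m) (n : WithTop ℕ∞) :
    ContDiffAt ℝ n Real.Gamma x := by
  have hx' : ∀ m : ℕ, (x : ℂ) ≠ -m := fun m h => hx m (by exact_mod_cast h)
  simpa only [Complex.Gamma_ofReal, Complex.ofReal_re] using
    (Complex.contDiffAt_Gamma hx' n).real_of_complex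

theorem contDiffAt_digamma {x : ℝ} (hx : ∀ m : ℕ, x ≠ -m) (n : WithTop ℕ∞) :
    ContDiffAt ℝ n digamma x :=
  ((Real.contDiffAt_Gamma hx (n + 1)).derivWithin le_rfl).div
    (Real.contDiffAt_Gamma hx n) (Real.Gamma_ne_zero hx)

theorem hasDerivAt_digamma {x : ℝ} (hx : ∀ m : ℕ, x ≠ -m) :
    HasDerivAt digamma (trigamma x) x :=
  ((contDiffAt_digamma hx 1).differentiableAt one_ne_zero).hasDerivAt

theorem hasDerivAt_log_Gamma {x : ℝ} (hx : ∀ m : ℕ, x ≠ -m) :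
    HasDerivAt (fun y => Real.log (Real.Gamma y)) (digamma x) x :=
  ((Real.contDiffAt_Gamma hx 1).differentiableAt one_ne_zero).hasDerivAt.log
    (Real.Gamma_ne_zero hx)

theorem hasDerivAt_gammaEntropy {μ κ : ℝ} (hμ : μ ≠ 0) (hκ : ∀ m : ℕ, κ ≠ -m) :
    HasDerivAt (gammaEntropy μ) (-((κ - 1) * (κ * trigamma κ - 1)) / κ) κ := by
  have hκ₀ : κ ≠ 0 := by simpa using hκ 0
  have h_log : HasDerivAt (fun y => Real.log (y / μ)) (1 / μ / (κ / μ)) κ :=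
    ((hasDerivAt_id κ).div_const μ).log (div_ne_zero hκ₀ hμ)
  have h_mul : HasDerivAt (fun y => (y - 1) * digamma y) (1 * digamma κ + (κ - 1) * trigamma κ) κ :=
    ((hasDerivAt_id κ).sub_const 1).mul (hasDerivAt_digamma hκ)
  refine ((((hasDerivAt_id κ).sub h_log).add (hasDerivAt_log_Gamma hκ)).sub h_mul).congr_deriv ?_
  field_simp
  ring

theorem gamma_entropy_deriv_kappa (μ : ℝ) (hμ : 0 < μ) :
    DifferentiableOn ℝ (fun κ => gammaEntropy μ κ) (Set.Ioi 0) ∧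
    (∀ κ : ℝ, 0 < κ → HasDerivAt (fun κ => gammaEntropy μ κ)
      (-((κ - 1) * (κ * trigamma κ - 1)) / κ) κ) := by
  have hderiv (κ : ℝ) (hκ : 0 < κ) :=
    hasDerivAt_gammaEntropy hμ.ne' fun m => ((neg_nonpos.mpr m.cast_nonneg).trans_lt hκ).ne'
  exact ⟨fun κ hκ => (hderiv κ hκ).differentiableAt.differentiableWithinAt, hderiv⟩
end

section
/- For every fixed mean μ > 0, the gamma entropy S_f(μ, κ) = κ - log(κ/μ) + log Γ(κ) - (κ - 1)ψ(κ) attains its maximum over κ ∈ (0, ∞) uniquely at κ = 1, where S_f(μ, 1) = 1 + log μ; that is, S_f(μ, κ) < 1 + log μ for all κ > 0 with κ ≠ 1. -/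
/-!
Let `φ x = log Γ(x) - x log x = log ∫₀^∞ s^(x-1) e^(-x s) ds` (`gammaLogPartition`), the log-Laplace
transform in `x` of the statistic `log s - s` under the measure `ds / s`. A direct computation gives
`S_f(μ, κ) - 1 - log μ = φ κ + (1 - κ) φ'(κ) - φ 1`, so the claim is that the tangent line of `φ`
at `κ` passes strictly below `φ` at `1`. This is strict convexity of a log-Laplace transform:
since `e^t ≥ 1 + t`, the mean `c` of the statistic under the tilted density `s^(κ-1) e^(-κ s)`
satisfies `φ y ≥ φ κ + (y - κ) c`, strictly for `y ≠ κ` because the statistic is not a.e. constant;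
as `φ` is differentiable, `c = φ'(κ) = ψ(κ) - log κ - 1`.
-/

open MeasureTheory Set Filter Topology Real

section TiltedExponential

variable {α : Type*} [MeasurableSpace α] {ν : Measure α} {w u : α → ℝ} {κ y c : ℝ}

theorem integral_mul_exp_sub_one_sub_eq
    (hκ : Integrable (fun a => w a * exp (κ * u a)) ν)
    (huκ : Integrable (fun a => u a * (w a * exp (κ * u a))) ν)
    (hy : Integrable (fun a => w a * exp (y * u a)) ν)
    (hc : ∫ a, u a * (w a * exp (κ * u a)) ∂ν = c * ∫ a, w a * exp (κ * u a) ∂ν) :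
    Integrable (fun a => exp ((y - κ) * c) * (w a * exp (κ * u a)) *
        (exp ((y - κ) * (u a - c)) - 1 - (y - κ) * (u a - c))) ν ∧
      ∫ a, exp ((y - κ) * c) * (w a * exp (κ * u a)) *
        (exp ((y - κ) * (u a - c)) - 1 - (y - κ) * (u a - c)) ∂ν =
      (∫ a, w a * exp (y * u a) ∂ν) - (∫ a, w a * exp (κ * u a) ∂ν) * exp ((y - κ) * c) := by
  set E := exp ((y - κ) * c)
  have hpt : ∀ a, E * (w a * exp (κ * u a)) *
      (exp ((y - κ) * (u a - c)) - 1 - (y - κ) * (u a - c)) =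
      w a * exp (y * u a) - (E * (1 - (y - κ) * c) * (w a * exp (κ * u a)) +
        E * (y - κ) * (u a * (w a * exp (κ * u a)))) := by
    intro a
    have : exp (y * u a) = E * exp ((y - κ) * (u a - c)) * exp (κ * u a) := by
      simp only [E, ← exp_add]; ring_nf
    rw [this]; ring
  have hκ' : Integrable (fun a => E * (1 - (y - κ) * c) * (w a * exp (κ * u a))) ν :=
    hκ.const_mul _
  have huκ' : Integrable (fun a => E * (y - κ) * (u a * (w a * exp (κ * u a)))) ν :=
    huκ.const_mul _
  have hsum : Integrable (fun a => E * (1 - (y - κ) * c) * (w a * exp (κ * u a)) +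
      E * (y - κ) * (u a * (w a * exp (κ * u a)))) ν := hκ'.add huκ'
  simp_rw [hpt]
  refine ⟨hy.sub hsum, ?_⟩
  rw [integral_sub hy hsum, integral_add hκ' huκ', integral_const_mul,
    integral_const_mul, hc]
  ring

theorem integral_mul_exp_mul_le (hw : 0 ≤ᵐ[ν] w)
    (hκ : Integrable (fun a => w a * exp (κ * u a)) ν)
    (huκ : Integrable (fun a => u a * (w a * exp (κ * u a))) ν)
    (hy : Integrable (fun a => w a * exp (y * u a)) ν)
    (hc : ∫ a, u a * (w a * exp (κ * u a)) ∂ν = c * ∫ a, w a * exp (κ * u a) ∂ν) :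
    (∫ a, w a * exp (κ * u a) ∂ν) * exp ((y - κ) * c) ≤ ∫ a, w a * exp (y * u a) ∂ν := by
  have hgap := (integral_mul_exp_sub_one_sub_eq hκ huκ hy hc).2
  have : 0 ≤ ∫ a, exp ((y - κ) * c) * (w a * exp (κ * u a)) *
      (exp ((y - κ) * (u a - c)) - 1 - (y - κ) * (u a - c)) ∂ν := by
    refine integral_nonneg_of_ae (hw.mono fun a ha => ?_)
    have := add_one_le_exp ((y - κ) * (u a - c))
    have : 0 ≤ exp ((y - κ) * (u a - c)) - 1 - (y - κ) * (u a - c) := by linarith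
    simp only [Pi.zero_apply] at ha ⊢
    positivity
  linarith

theorem integral_mul_exp_mul_lt (hw : ∀ᵐ a ∂ν, 0 < w a) (hu : ¬ u =ᵐ[ν] fun _ => c)
    (hyκ : y ≠ κ)
    (hκ : Integrable (fun a => w a * exp (κ * u a)) ν)
    (huκ : Integrable (fun a => u a * (w a * exp (κ * u a))) ν)
    (hy : Integrable (fun a => w a * exp (y * u a)) ν)
    (hc : ∫ a, u a * (w a * exp (κ * u a)) ∂ν = c * ∫ a, w a * exp (κ * u a) ∂ν) :
    (∫ a, w a * exp (κ * u a) ∂ν) * exp ((y - κ) * c) < ∫ a, w a * exp (y * u a) ∂ν := by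
  obtain ⟨hint, hgap⟩ := integral_mul_exp_sub_one_sub_eq hκ huκ hy hc
  set g := fun a => exp ((y - κ) * c) * (w a * exp (κ * u a)) *
      (exp ((y - κ) * (u a - c)) - 1 - (y - κ) * (u a - c))
  have hg : ∀ a, 0 < w a → u a ≠ c → 0 < g a := by
    intro a hwa hua
    have := add_one_lt_exp (mul_ne_zero (sub_ne_zero.2 hyκ) (sub_ne_zero.2 hua))
    have : 0 < exp ((y - κ) * (u a - c)) - 1 - (y - κ) * (u a - c) := by linarith
    positivity
  have hg0 : 0 ≤ᵐ[ν] g := hw.mono fun a ha => by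
    by_cases hua : u a = c
    · simp [g, hua]
    · exact (hg a ha hua).le
  have hsupp : {a | u a ≠ c} ≤ᵐ[ν] Function.support g := hw.mono fun a ha hua => (hg a ha hua).ne'
  have hpos : 0 < ∫ a, g a ∂ν := by
    rw [integral_pos_iff_support_of_nonneg_ae hg0 hint]
    refine lt_of_lt_of_le (pos_iff_ne_zero.2 ?_) (measure_mono_ae hsupp)
    rwa [EventuallyEq, ae_iff] at hu
  linarith

end TiltedExponential

theorem HasDerivAt.eq_of_eventually_add_mul_le {f : ℝ → ℝ} {f' c x : ℝ} (hf : HasDerivAt f f' x)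
    (h : ∀ᶠ y in 𝓝 x, f x + (y - x) * c ≤ f y) : f' = c := by
  have hmin : IsLocalMin (fun y => f y - (y - x) * c) x := h.mono fun y hy => by simp; linarith
  have := hmin.hasDerivAt_eq_zero (hf.sub (((hasDerivAt_id x).sub_const x).mul_const c))
  simp only [one_mul] at this
  linarith

theorem abs_mul_exp_le {a t : ℝ} (ha : 0 < a) (ht : t ≤ 0) :
    |t| * exp (a * t) ≤ 2 / a * exp (a / 2 * t) := by
  have hsq : exp (a * t) = exp (a / 2 * t) * exp (a / 2 * t) := by rw [← exp_add]; ring_nf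
  have hlin : -t * exp (a / 2 * t) ≤ 2 / a := by
    have h := add_one_le_exp (-(a / 2 * t))
    have hprod : exp (-(a / 2 * t)) * exp (a / 2 * t) = 1 := by rw [← exp_add]; simp
    rw [le_div_iff₀ ha]
    nlinarith [exp_pos (a / 2 * t)]
  rw [abs_of_nonpos ht, hsq, ← mul_assoc]
  exact mul_le_mul_of_nonneg_right hlin (exp_pos _).le

theorem inv_mul_exp_mul_log_sub_eq (x : ℝ) {s : ℝ} (hs : 0 < s) :
    s⁻¹ * exp (x * (log s - s)) = s ^ (x - 1) * exp (-(x * s)) := by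
  have hinv : s⁻¹ = exp (-log s) := by rw [exp_neg, exp_log hs]
  rw [hinv, rpow_def_of_pos hs, ← exp_add, ← exp_add]
  ring_nf

theorem integrableOn_inv_mul_exp_mul_log_sub {x : ℝ} (hx : 0 < x) :
    IntegrableOn (fun s => s⁻¹ * exp (x * (log s - s))) (Ioi 0) := by
  refine (integrableOn_rpow_mul_exp_neg_mul_rpow (s := x - 1) (by linarith) one_pos hx).congr_fun
    (fun s hs => ?_) measurableSet_Ioi
  dsimp only
  rw [inv_mul_exp_mul_log_sub_eq x hs, rpow_one, neg_mul]

theorem integral_inv_mul_exp_mul_log_sub {x : ℝ} (hx : 0 < x) :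
    ∫ s in Ioi 0, s⁻¹ * exp (x * (log s - s)) = (1 / x) ^ x * Gamma x := by
  rw [setIntegral_congr_fun measurableSet_Ioi fun s hs => inv_mul_exp_mul_log_sub_eq x hs]
  exact integral_rpow_mul_exp_neg_mul_Ioi hx hx

theorem integrableOn_log_sub_mul_inv_mul_exp {x : ℝ} (hx : 0 < x) :
    IntegrableOn (fun s => (log s - s) * (s⁻¹ * exp (x * (log s - s)))) (Ioi 0) := by
  refine ((integrableOn_inv_mul_exp_mul_log_sub (half_pos hx)).const_mul (2 / x)).mono'
    (by fun_prop) ((ae_restrict_iff' measurableSet_Ioi).2 (.of_forall fun s hs => ?_))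
  have hs : 0 < s := hs
  have hu : log s - s ≤ 0 := by linarith [log_le_sub_one_of_pos hs]
  have := mul_le_mul_of_nonneg_left (abs_mul_exp_le hx hu) (inv_nonneg.2 hs.le)
  rw [norm_mul, norm_mul, norm_inv, Real.norm_of_nonneg hs.le, norm_of_nonneg (exp_pos _).le,
    Real.norm_eq_abs]
  linarith

theorem not_log_sub_ae_eq_const (c : ℝ) :
    ¬ (fun s => log s - s) =ᵐ[volume.restrict (Ioi 0)] fun _ => c := by
  intro h
  have hEq := Measure.eqOn_open_of_ae_eq h isOpen_Ioi
    ((continuousOn_log.mono fun _ hs => ne_of_gt hs).sub continuousOn_id) continuousOn_const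
  have h1 := hEq (mem_Ioi.2 one_pos)
  have h2 := hEq (mem_Ioi.2 two_pos)
  have := log_lt_sub_one_of_pos two_pos (by norm_num)
  simp only [log_one] at h1 h2
  linarith

noncomputable def gammaLogPartition (x : ℝ) : ℝ := log (Gamma x) - x * log x

theorem log_integral_inv_mul_exp_mul_log_sub {x : ℝ} (hx : 0 < x) :
    log (∫ s in Ioi 0, s⁻¹ * exp (x * (log s - s))) = gammaLogPartition x := by
  rw [integral_inv_mul_exp_mul_log_sub hx, log_mul (by positivity) (Gamma_pos_of_pos hx).ne',
    log_rpow (by positivity), one_div, log_inv, gammaLogPartition]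
  ring

theorem hasDerivAt_gammaLogPartition {x : ℝ} (hx : 0 < x) :
    HasDerivAt gammaLogPartition (digamma x - log x - 1) x := by
  have hΓ : DifferentiableAt ℝ Gamma x :=
    differentiableAt_Gamma fun m => by linarith [show (0 : ℝ) ≤ m from m.cast_nonneg]
  rw [show digamma x - log x - 1 = deriv Gamma x / Gamma x - (log x + 1) by rw [digamma]; ring]
  exact (hΓ.hasDerivAt.log (Gamma_pos_of_pos hx).ne').sub (hasDerivAt_mul_log hx.ne')

theorem exists_gammaLogPartition_tangent {κ : ℝ} (hκ : 0 < κ) : ∃ c, ∀ y, 0 < y →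
    gammaLogPartition κ + (y - κ) * c ≤ gammaLogPartition y ∧
      (y ≠ κ → gammaLogPartition κ + (y - κ) * c < gammaLogPartition y) := by
  set K := fun x : ℝ => ∫ s in Ioi 0, s⁻¹ * exp (x * (log s - s))
  have hK : 0 < K κ := by
    simp only [K, integral_inv_mul_exp_mul_log_sub hκ]
    exact mul_pos (by positivity) (Gamma_pos_of_pos hκ)
  set c := (∫ s in Ioi 0, (log s - s) * (s⁻¹ * exp (κ * (log s - s)))) / K κ
  have hc : ∫ s in Ioi 0, (log s - s) * (s⁻¹ * exp (κ * (log s - s))) = c * K κ :=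
    (div_mul_cancel₀ _ hK.ne').symm
  have hw : ∀ᵐ s ∂volume.restrict (Ioi (0 : ℝ)), 0 < s⁻¹ :=
    (ae_restrict_iff' measurableSet_Ioi).2 (.of_forall fun s hs => inv_pos.2 hs)
  have hlog : ∀ y, log (K κ * exp ((y - κ) * c)) = gammaLogPartition κ + (y - κ) * c :=
    fun y => by
      rw [log_mul hK.ne' (exp_pos _).ne', log_exp, log_integral_inv_mul_exp_mul_log_sub hκ]
  refine ⟨c, fun y hy => ⟨?_, fun hyκ => ?_⟩⟩
  · rw [← hlog y, ← log_integral_inv_mul_exp_mul_log_sub hy]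
    exact log_le_log (by positivity) <| integral_mul_exp_mul_le
      (hw.mono fun _ hs => hs.le) (integrableOn_inv_mul_exp_mul_log_sub hκ)
      (integrableOn_log_sub_mul_inv_mul_exp hκ) (integrableOn_inv_mul_exp_mul_log_sub hy) hc
  · rw [← hlog y, ← log_integral_inv_mul_exp_mul_log_sub hy]
    exact log_lt_log (by positivity) <| integral_mul_exp_mul_lt hw (not_log_sub_ae_eq_const c)
      hyκ (integrableOn_inv_mul_exp_mul_log_sub hκ)
      (integrableOn_log_sub_mul_inv_mul_exp hκ) (integrableOn_inv_mul_exp_mul_log_sub hy) hc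

theorem gammaLogPartition_add_mul_lt {κ y : ℝ} (hκ : 0 < κ) (hy : 0 < y) (hyκ : y ≠ κ) :
    gammaLogPartition κ + (y - κ) * (digamma κ - log κ - 1) < gammaLogPartition y := by
  obtain ⟨c, hc⟩ := exists_gammaLogPartition_tangent hκ
  have hderiv : digamma κ - log κ - 1 = c :=
    (hasDerivAt_gammaLogPartition hκ).eq_of_eventually_add_mul_le <|
      eventually_of_mem (Ioi_mem_nhds hκ) fun z hz => (hc z hz).1
  exact hderiv ▸ (hc y hy).2 hyκ

theorem gamma_entropy_max_at_one (μ : ℝ) (hμ : 0 < μ) :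
    gammaEntropy μ 1 = 1 + Real.log μ ∧
    ∀ κ : ℝ, 0 < κ → κ ≠ 1 → gammaEntropy μ κ < 1 + Real.log μ := by
  refine ⟨by simp [gammaEntropy], fun κ hκ hκ1 => ?_⟩
  have h := gammaLogPartition_add_mul_lt hκ one_pos (Ne.symm hκ1)
  simp only [gammaLogPartition, Gamma_one, log_one, one_mul, sub_zero] at h
  rw [gammaEntropy, log_div hκ.ne' hμ.ne']
  linarith
end

section
/- For all α₁, c, α₂ > 0 and every x > 0, the marginal density of the first variable of the McKay distribution is a gamma density: ∫ₓ^∞ m(x, y) dy = c^{α₁} x^{α₁-1} e^{-cx} / Γ(α₁). -/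
/-- The McKay bivariate gamma density with parameters `α₁ c α₂`, on `0 < x < y`. -/
noncomputable def mckayPDF (α₁ c α₂ : ℝ) (x y : ℝ) : ℝ :=
  c ^ (α₁ + α₂) * x ^ (α₁ - 1) * (y - x) ^ (α₂ - 1) * Real.exp (-(c * y)) /
    (Real.Gamma α₁ * Real.Gamma α₂)

/-!
For fixed `x`, the density `y ↦ m(x, y)` is a constant multiple of `(y - x) ^ (α₂ - 1) * e^{-cy}`.
Translating `y = t + x` turns its integral over `(x, ∞)` into `e^{-cx}` times the gamma integral
`∫₀^∞ t ^ (α₂ - 1) e^{-ct} dt = Γ(α₂) / c ^ α₂`, and the factors `Γ(α₂)` and `c ^ α₂` cancel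
against the normalising constant.
-/

open Real Set MeasureTheory

theorem setIntegral_Ioi_eq_setIntegral_Ioi_zero_comp_add {E : Type*} [NormedAddCommGroup E]
    [NormedSpace ℝ E] (f : ℝ → E) (x : ℝ) :
    ∫ y in Ioi x, f y = ∫ t in Ioi 0, f (t + x) := by
  rw [← (measurePreserving_add_right volume x).setIntegral_preimage_emb
    (measurableEmbedding_addRight x), preimage_add_const_Ioi, sub_self]

theorem integral_Ioi_rpow_sub_mul_exp_neg_mul {a c : ℝ} (ha : 0 < a) (hc : 0 < c) (x : ℝ) :
    ∫ y in Ioi x, (y - x) ^ (a - 1) * exp (-(c * y)) = exp (-(c * x)) * Gamma a / c ^ a := by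
  have hshift (t : ℝ) : (t + x - x) ^ (a - 1) * exp (-(c * (t + x))) =
      exp (-(c * x)) * (t ^ (a - 1) * exp (-(c * t))) := by
    rw [add_sub_cancel_right, mul_add, neg_add, exp_add]; ring
  simp_rw [setIntegral_Ioi_eq_setIntegral_Ioi_zero_comp_add _ x, hshift, integral_const_mul,
    integral_rpow_mul_exp_neg_mul_Ioi ha hc, one_div, inv_rpow hc.le]
  ring

theorem mckayPDF_eq_const_mul (α₁ c α₂ x y : ℝ) :
    mckayPDF α₁ c α₂ x y = c ^ (α₁ + α₂) * x ^ (α₁ - 1) / (Gamma α₁ * Gamma α₂) *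
      ((y - x) ^ (α₂ - 1) * exp (-(c * y))) := by
  rw [mckayPDF]; ring

theorem mckay_marginal_x_general (α₁ c α₂ : ℝ) (hc : 0 < c) (h₂ : 0 < α₂)
    (x : ℝ) :
    ∫ y in Set.Ioi x, mckayPDF α₁ c α₂ x y =
      c ^ α₁ * x ^ (α₁ - 1) * Real.exp (-(c * x)) / Real.Gamma α₁ := by
  have hΓ : Gamma α₂ ≠ 0 := (Gamma_pos_of_pos h₂).ne'
  have hcpow : c ^ α₂ ≠ 0 := (rpow_pos_of_pos hc α₂).ne'
  simp_rw [mckayPDF_eq_const_mul, integral_const_mul,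
    integral_Ioi_rpow_sub_mul_exp_neg_mul h₂ hc, rpow_add hc]
  field_simp

theorem mckay_marginal_x (α₁ c α₂ : ℝ) (h₁ : 0 < α₁) (hc : 0 < c) (h₂ : 0 < α₂)
    (x : ℝ) (hx : 0 < x) :
    ∫ y in Set.Ioi x, mckayPDF α₁ c α₂ x y =
      c ^ α₁ * x ^ (α₁ - 1) * Real.exp (-(c * x)) / Real.Gamma α₁ :=
  mckay_marginal_x_general α₁ c α₂ hc h₂ x
end

section
/- For all α₁, c, α₂ > 0 and every y > 0, the marginal density of the second variable of the McKay distribution is a gamma density with shape α₁ + α₂: ∫₀^y m(x, y) dx = c^{α₁+α₂} y^{α₁+α₂-1} e^{-cy} / Γ(α₁ + α₂). -/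
/-!
For fixed `y`, the density is `x ^ (α₁ - 1) * (y - x) ^ (α₂ - 1)` times a factor independent
of `x`, and the substitution `x = y t` turns the integral of that kernel over `(0, y)` into
`y ^ (α₁ + α₂ - 1) B(α₁, α₂)`. The Euler identity `B(α₁, α₂) = Γ(α₁) Γ(α₂) / Γ(α₁ + α₂)` then
cancels `Γ(α₁) Γ(α₂)`.
-/

open ProbabilityTheory

lemma Complex.ofReal_beta (a b : ℝ) :
    (beta a b : ℂ) = Complex.Gamma a * Complex.Gamma b / Complex.Gamma (a + b) := by
  rw [beta, ← Complex.ofReal_add, Complex.Gamma_ofReal, Complex.Gamma_ofReal,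
    Complex.Gamma_ofReal]
  push_cast
  rfl

lemma Complex.ofReal_intervalIntegral_rpow_mul_sub_rpow (a b : ℝ) {y : ℝ} (hy : 0 ≤ y) :
    ((∫ x in (0 : ℝ)..y, x ^ (a - 1) * (y - x) ^ (b - 1) : ℝ) : ℂ) =
      ∫ x in (0 : ℝ)..y, (x : ℂ) ^ ((a : ℂ) - 1) * ((y : ℂ) - x) ^ ((b : ℂ) - 1) := by
  rw [← intervalIntegral.integral_ofReal]
  refine intervalIntegral.integral_congr fun x hx => ?_
  rw [Set.uIcc_of_le hy] at hx
  simp only [Complex.ofReal_mul, Complex.ofReal_cpow hx.1,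
    Complex.ofReal_cpow (sub_nonneg.mpr hx.2), Complex.ofReal_sub, Complex.ofReal_one]

theorem intervalIntegral_rpow_mul_sub_rpow {a b : ℝ} (ha : 0 < a) (hb : 0 < b) {y : ℝ}
    (hy : 0 < y) :
    ∫ x in (0 : ℝ)..y, x ^ (a - 1) * (y - x) ^ (b - 1) = y ^ (a + b - 1) * beta a b := by
  apply Complex.ofReal_injective
  rw [Complex.ofReal_intervalIntegral_rpow_mul_sub_rpow a b hy.le,
    Complex.betaIntegral_scaled _ _ hy,
    Complex.betaIntegral_eq_Gamma_mul_div _ _ (by simpa using ha) (by simpa using hb),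
    Complex.ofReal_mul, Complex.ofReal_cpow hy.le, Complex.ofReal_beta]
  push_cast
  rfl

theorem mckay_marginal_y_general (α₁ c α₂ : ℝ) (h₁ : 0 < α₁) (h₂ : 0 < α₂)
    (y : ℝ) (hy : 0 < y) :
    ∫ x in (0 : ℝ)..y, mckayPDF α₁ c α₂ x y =
      c ^ (α₁ + α₂) * y ^ (α₁ + α₂ - 1) * Real.exp (-(c * y)) /
        Real.Gamma (α₁ + α₂) := by
  have hpdf : ∀ x, mckayPDF α₁ c α₂ x y =
      c ^ (α₁ + α₂) * Real.exp (-(c * y)) / (Real.Gamma α₁ * Real.Gamma α₂) *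
        (x ^ (α₁ - 1) * (y - x) ^ (α₂ - 1)) := fun x => by
    rw [mckayPDF]; ring
  have hΓ₁ := (Real.Gamma_pos_of_pos h₁).ne'
  have hΓ₂ := (Real.Gamma_pos_of_pos h₂).ne'
  have hΓ := (Real.Gamma_pos_of_pos (add_pos h₁ h₂)).ne'
  simp_rw [hpdf]
  rw [intervalIntegral.integral_const_mul, intervalIntegral_rpow_mul_sub_rpow h₁ h₂ hy, beta]
  field_simp

theorem mckay_marginal_y (α₁ c α₂ : ℝ) (h₁ : 0 < α₁) (hc : 0 < c) (h₂ : 0 < α₂)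
    (y : ℝ) (hy : 0 < y) :
    ∫ x in (0 : ℝ)..y, mckayPDF α₁ c α₂ x y =
      c ^ (α₁ + α₂) * y ^ (α₁ + α₂ - 1) * Real.exp (-(c * y)) /
        Real.Gamma (α₁ + α₂) :=
  mckay_marginal_y_general α₁ c α₂ h₁ h₂ y hy
end

section
/- For all α₁, c, α₂ > 0, the covariance of the two coordinates under the McKay density equals α₁/c²; that is, ∫₀^∞ ∫ₓ^∞ x y m(x, y) dy dx - (∫₀^∞ ∫ₓ^∞ x m(x, y) dy dx)(∫₀^∞ ∫ₓ^∞ y m(x, y) dy dx) = α₁/c². -/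
open MeasureTheory Set ProbabilityTheory Real

lemma setIntegral_Ioi_eq_setIntegral_Ioi_zero_add (f : ℝ → ℝ) (x : ℝ) :
    ∫ y in Ioi x, f y = ∫ t in Ioi 0, f (x + t) := by
  rw [← integral_indicator measurableSet_Ioi, ← integral_indicator measurableSet_Ioi,
    ← integral_add_left_eq_self (Set.indicator (Ioi x) f) x]
  congr 1 with t
  simp only [indicator_apply, mem_Ioi, lt_add_iff_pos_right]

section GammaMoments

variable {a r : ℝ}

lemma gammaPDFReal_of_nonneg {t : ℝ} (ht : 0 ≤ t) :
    gammaPDFReal a r t = r ^ a / Gamma a * t ^ (a - 1) * exp (-(r * t)) :=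
  if_pos ht

lemma rpow_mul_gammaPDFReal {s t : ℝ} (ht : 0 < t) :
    t ^ s * gammaPDFReal a r t = r ^ a / Gamma a * (t ^ (a + s - 1) * exp (-(r * t))) := by
  rw [gammaPDFReal_of_nonneg ht.le, show a + s - 1 = s + (a - 1) by ring, rpow_add ht]
  ring

lemma integrableOn_rpow_mul_gammaPDFReal (hr : 0 < r) {s : ℝ} (hs : 0 < a + s) :
    IntegrableOn (fun t ↦ t ^ s * gammaPDFReal a r t) (Ioi 0) := by
  have hΓ : IntegrableOn (fun t : ℝ ↦ t ^ (a + s - 1) * exp (-(r * t))) (Ioi 0) := by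
    simpa only [rpow_one, neg_mul] using
      integrableOn_rpow_mul_exp_neg_mul_rpow (p := 1) (by linarith) one_pos hr
  exact IntegrableOn.congr_fun (hΓ.const_mul (r ^ a / Gamma a))
    (fun t ht ↦ (rpow_mul_gammaPDFReal ht).symm) measurableSet_Ioi

lemma integral_rpow_mul_gammaPDFReal (hr : 0 < r) {s : ℝ} (hs : 0 < a + s) :
    ∫ t in Ioi 0, t ^ s * gammaPDFReal a r t = Gamma (a + s) / (Gamma a * r ^ s) := by
  rw [setIntegral_congr_fun measurableSet_Ioi (fun t ht ↦ rpow_mul_gammaPDFReal ht),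
    integral_const_mul, integral_rpow_mul_exp_neg_mul_Ioi hs hr, one_div, inv_rpow hr.le,
    rpow_add hr]
  field_simp [(rpow_pos_of_pos hr a).ne', (rpow_pos_of_pos hr s).ne']

lemma integral_quadratic_mul_gammaPDFReal (ha : 0 < a) (hr : 0 < r) (u v w : ℝ) :
    ∫ t in Ioi 0, (u + v * t + w * t ^ 2) * gammaPDFReal a r t =
      u + v * (a / r) + w * (a * (a + 1) / r ^ 2) := by
  have hmoment (n : ℕ) :
      ∫ t in Ioi 0, t ^ n * gammaPDFReal a r t = Gamma (a + n) / (Gamma a * r ^ n) := by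
    simpa only [rpow_natCast] using integral_rpow_mul_gammaPDFReal hr (s := n) (by positivity)
  have hint (n : ℕ) : IntegrableOn (fun t ↦ t ^ n * gammaPDFReal a r t) (Ioi 0) := by
    simpa only [rpow_natCast] using integrableOn_rpow_mul_gammaPDFReal hr (s := n) (by positivity)
  have hsplit : (fun t ↦ (u + v * t + w * t ^ 2) * gammaPDFReal a r t) = fun t ↦
      u * (t ^ 0 * gammaPDFReal a r t) + v * (t ^ 1 * gammaPDFReal a r t) +
        w * (t ^ 2 * gammaPDFReal a r t) := by
    ext t; ring
  rw [hsplit, integral_add ?sum ((hint 2).const_mul w),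
    integral_add ((hint 0).const_mul u) ((hint 1).const_mul v),
    integral_const_mul, integral_const_mul, integral_const_mul, hmoment, hmoment, hmoment]
  · push_cast
    rw [add_zero, show a + 2 = a + 1 + 1 by ring, Gamma_add_one (by positivity : a + 1 ≠ 0),
      Gamma_add_one ha.ne']
    field_simp [(Gamma_pos_of_pos ha).ne']
  case sum => exact ((hint 0).const_mul u).add ((hint 1).const_mul v)

end GammaMoments

section McKay

variable {α₁ c α₂ : ℝ}

lemma mckayPDF_self_add (hc : 0 < c) {x t : ℝ} (hx : 0 ≤ x) (ht : 0 ≤ t) :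
    mckayPDF α₁ c α₂ x (x + t) = gammaPDFReal α₁ c x * gammaPDFReal α₂ c t := by
  rw [mckayPDF, gammaPDFReal_of_nonneg hx, gammaPDFReal_of_nonneg ht, add_sub_cancel_left,
    rpow_add hc, mul_add, neg_add, exp_add]
  ring

lemma setIntegral_Ioi_mul_mckayPDF (hc : 0 < c) (f : ℝ → ℝ) {x : ℝ} (hx : 0 ≤ x) :
    ∫ y in Ioi x, f y * mckayPDF α₁ c α₂ x y =
      gammaPDFReal α₁ c x * ∫ t in Ioi 0, f (x + t) * gammaPDFReal α₂ c t := by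
  rw [setIntegral_Ioi_eq_setIntegral_Ioi_zero_add, ← integral_const_mul]
  refine setIntegral_congr_fun measurableSet_Ioi fun t ht ↦ ?_
  rw [mckayPDF_self_add hc hx (le_of_lt ht)]
  ring

lemma setIntegral_Ioi_affine_mul_mckayPDF (h₂ : 0 < α₂) (hc : 0 < c) (u v : ℝ) {x : ℝ}
    (hx : 0 ≤ x) :
    ∫ y in Ioi x, (u + v * y) * mckayPDF α₁ c α₂ x y =
      (u + v * x + v * (α₂ / c)) * gammaPDFReal α₁ c x := by
  rw [setIntegral_Ioi_mul_mckayPDF hc (fun y ↦ u + v * y) hx]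
  calc gammaPDFReal α₁ c x * ∫ t in Ioi 0, (u + v * (x + t)) * gammaPDFReal α₂ c t
      = gammaPDFReal α₁ c x *
          ∫ t in Ioi 0, (u + v * x + v * t + 0 * t ^ 2) * gammaPDFReal α₂ c t := by
        congr 2 with t; ring
    _ = _ := by rw [integral_quadratic_mul_gammaPDFReal h₂ hc]; ring

lemma integral_integral_fst_mul_mckayPDF (h₁ : 0 < α₁) (hc : 0 < c) (h₂ : 0 < α₂) :
    ∫ x in Ioi 0, ∫ y in Ioi x, x * mckayPDF α₁ c α₂ x y = α₁ / c := by
  calc _ = ∫ x in Ioi 0, (0 + 1 * x + 0 * x ^ 2) * gammaPDFReal α₁ c x :=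
        setIntegral_congr_fun measurableSet_Ioi fun x hx ↦ by
          have h := setIntegral_Ioi_affine_mul_mckayPDF (α₁ := α₁) h₂ hc x 0 (le_of_lt hx)
          simp only [zero_mul, add_zero] at h
          rw [h]; ring
    _ = α₁ / c := by rw [integral_quadratic_mul_gammaPDFReal h₁ hc]; ring

lemma integral_integral_snd_mul_mckayPDF (h₁ : 0 < α₁) (hc : 0 < c) (h₂ : 0 < α₂) :
    ∫ x in Ioi 0, ∫ y in Ioi x, y * mckayPDF α₁ c α₂ x y = (α₁ + α₂) / c := by
  calc _ = ∫ x in Ioi 0, (α₂ / c + 1 * x + 0 * x ^ 2) * gammaPDFReal α₁ c x :=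
        setIntegral_congr_fun measurableSet_Ioi fun x hx ↦ by
          have h := setIntegral_Ioi_affine_mul_mckayPDF (α₁ := α₁) h₂ hc 0 1 (le_of_lt hx)
          simp only [zero_add, one_mul] at h
          rw [h]; ring
    _ = (α₁ + α₂) / c := by rw [integral_quadratic_mul_gammaPDFReal h₁ hc]; ring

lemma integral_integral_fst_mul_snd_mul_mckayPDF (h₁ : 0 < α₁) (hc : 0 < c) (h₂ : 0 < α₂) :
    ∫ x in Ioi 0, ∫ y in Ioi x, x * y * mckayPDF α₁ c α₂ x y =
      α₁ * (α₁ + α₂ + 1) / c ^ 2 := by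
  calc _ = ∫ x in Ioi 0, (0 + α₂ / c * x + 1 * x ^ 2) * gammaPDFReal α₁ c x :=
        setIntegral_congr_fun measurableSet_Ioi fun x hx ↦ by
          have h := setIntegral_Ioi_affine_mul_mckayPDF (α₁ := α₁) h₂ hc 0 x (le_of_lt hx)
          simp only [zero_add] at h
          rw [h]; ring
    _ = α₁ * (α₁ + α₂ + 1) / c ^ 2 := by
        rw [integral_quadratic_mul_gammaPDFReal h₁ hc]; field_simp; ring

end McKay

theorem mckay_covariance (α₁ c α₂ : ℝ) (h₁ : 0 < α₁) (hc : 0 < c) (h₂ : 0 < α₂) :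
    (∫ x in Set.Ioi (0 : ℝ), ∫ y in Set.Ioi x, x * y * mckayPDF α₁ c α₂ x y) -
      (∫ x in Set.Ioi (0 : ℝ), ∫ y in Set.Ioi x, x * mckayPDF α₁ c α₂ x y) *
        (∫ x in Set.Ioi (0 : ℝ), ∫ y in Set.Ioi x, y * mckayPDF α₁ c α₂ x y) =
      α₁ / c ^ 2 := by
  rw [integral_integral_fst_mul_snd_mul_mckayPDF h₁ hc h₂,
    integral_integral_fst_mul_mckayPDF h₁ hc h₂, integral_integral_snd_mul_mckayPDF h₁ hc h₂]
  field_simp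
  ring
end

section
/- For all α₁, c, α₂ > 0, the Fisher information matrix of the McKay family in the coordinates (α₁, c, α₂) has entries g₁₁ = ψ'(α₁), g₁₂ = g₂₁ = -1/c, g₁₃ = g₃₁ = 0, g₂₂ = (α₁ + α₂)/c², g₂₃ = g₃₂ = -1/c, g₃₃ = ψ'(α₂), where gᵢⱼ = ∫₀^∞ ∫ₓ^∞ (∂ᵢ log m(x, y)) (∂ⱼ log m(x, y)) m(x, y) dy dx and ∂₁, ∂₂, ∂₃ denote partial derivatives with respect to α₁, c, α₂ respectively. -/
open MeasureTheory Set Filter Real ProbabilityTheory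
open scoped Nat Topology

lemma abs_log_pow_le {δ t : ℝ} (hδ : 0 < δ) (ht : 0 < t) (k : ℕ) :
    |log t| ^ k ≤ k ! / δ ^ k * (t ^ δ + t ^ (-δ)) := by
  have hexp : exp (δ * |log t|) ≤ t ^ δ + t ^ (-δ) := by
    rw [rpow_def_of_pos ht, rpow_def_of_pos ht]
    rcases abs_cases (log t) with ⟨h, -⟩ | ⟨h, -⟩ <;> rw [h]
    · rw [mul_comm δ]; linarith [exp_pos (log t * -δ)]
    · rw [mul_comm δ, neg_mul_comm]; linarith [exp_pos (log t * δ)]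
  have := pow_div_factorial_le_exp (δ * |log t|) (by positivity) k
  rw [mul_pow, div_le_iff₀ (by positivity)] at this
  rw [div_mul_eq_mul_div, le_div_iff₀ (by positivity)]
  nlinarith [Nat.factorial_pos k, pow_pos hδ k]

lemma integrableOn_rpow_mul_exp_neg_mul {p c : ℝ} (hp : 0 < p) (hc : 0 < c) :
    IntegrableOn (fun t : ℝ => t ^ (p - 1) * exp (-(c * t))) (Ioi 0) := by
  simpa [neg_mul] using integrableOn_rpow_mul_exp_neg_mul_rpow (by linarith : -1 < p - 1) one_pos hc

lemma integrableOn_rpow_mul_exp_neg_mul_mul_abs_log_pow {p c : ℝ} (hp : 0 < p) (hc : 0 < c)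
    (k : ℕ) :
    IntegrableOn (fun t : ℝ => t ^ (p - 1) * exp (-(c * t)) * |log t| ^ k) (Ioi 0) := by
  have hδ : 0 < p / 2 := by positivity
  refine Integrable.mono'
    (((integrableOn_rpow_mul_exp_neg_mul (by linarith : 0 < p + p / 2) hc).add
      (integrableOn_rpow_mul_exp_neg_mul (by linarith : 0 < p - p / 2) hc)).const_mul
      (k ! / (p / 2) ^ k)) (by fun_prop) ?_
  filter_upwards [self_mem_ae_restrict measurableSet_Ioi] with t (ht : 0 < t)
  rw [norm_of_nonneg (by positivity)]
  calc t ^ (p - 1) * exp (-(c * t)) * |log t| ^ k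
      ≤ t ^ (p - 1) * exp (-(c * t)) * (k ! / (p / 2) ^ k * (t ^ (p / 2) + t ^ (-(p / 2)))) :=
        mul_le_mul_of_nonneg_left (abs_log_pow_le hδ ht k) (by positivity)
    _ = _ := by
        simp only [Pi.add_apply, add_sub_right_comm, sub_eq_add_neg _ (p / 2), rpow_add ht]
        ring

lemma integrableOn_rpow_mul_exp_neg_mul_mul_log_pow {p c : ℝ} (hp : 0 < p) (hc : 0 < c)
    (k : ℕ) :
    IntegrableOn (fun t : ℝ => t ^ (p - 1) * exp (-(c * t)) * log t ^ k) (Ioi 0) := by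
  refine (integrableOn_rpow_mul_exp_neg_mul_mul_abs_log_pow hp hc k).mono' (by fun_prop) ?_
  filter_upwards [self_mem_ae_restrict measurableSet_Ioi] with t (ht : 0 < t)
  simp [abs_of_pos (rpow_pos_of_pos ht _)]

lemma rpow_le_rpow_add_rpow {t p q s : ℝ} (ht : 0 < t) (hps : p ≤ s) (hsq : s ≤ q) :
    t ^ s ≤ t ^ p + t ^ q := by
  rcases le_total t 1 with h | h
  · linarith [rpow_le_rpow_of_exponent_ge ht h hps, rpow_nonneg ht.le q]
  · linarith [rpow_le_rpow_of_exponent_le h hsq, rpow_nonneg ht.le p]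

noncomputable def gammaLogMoment (k : ℕ) (c a : ℝ) : ℝ :=
  ∫ t in Ioi 0, t ^ (a - 1) * exp (-(c * t)) * log t ^ k

lemma hasDerivAt_gammaLogMoment (k : ℕ) {c a : ℝ} (hc : 0 < c) (ha : 0 < a) :
    HasDerivAt (gammaLogMoment k c) (gammaLogMoment (k + 1) c a) a := by
  have hball : Metric.ball a (a / 2) ∈ 𝓝 a := Metric.ball_mem_nhds a (by positivity)
  refine (hasDerivAt_integral_of_dominated_loc_of_deriv_le hball
    (F := fun s t => t ^ (s - 1) * exp (-(c * t)) * log t ^ k)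
    (F' := fun s t => t ^ (s - 1) * exp (-(c * t)) * log t ^ (k + 1))
    (.of_forall fun s => by fun_prop) (integrableOn_rpow_mul_exp_neg_mul_mul_log_pow ha hc k)
    (by fun_prop) (bound := fun t => (t ^ (a / 2 - 1) + t ^ (3 * a / 2 - 1)) *
      exp (-(c * t)) * |log t| ^ (k + 1)) ?_ ?_ ?_).2
  · filter_upwards [self_mem_ae_restrict measurableSet_Ioi] with t (ht : 0 < t) s hs
    rw [Metric.mem_ball, dist_eq, abs_lt] at hs
    rw [norm_mul, norm_mul, norm_pow, norm_of_nonneg (rpow_nonneg ht.le _),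
      norm_of_nonneg (exp_pos _).le, norm_eq_abs]
    gcongr
    exact rpow_le_rpow_add_rpow ht (by linarith) (by linarith)
  · simpa only [add_mul] using Integrable.fun_add
      (integrableOn_rpow_mul_exp_neg_mul_mul_abs_log_pow (by positivity : 0 < a / 2) hc
        (k + 1))
      (integrableOn_rpow_mul_exp_neg_mul_mul_abs_log_pow (by positivity : 0 < 3 * a / 2) hc
        (k + 1))
  · filter_upwards [self_mem_ae_restrict measurableSet_Ioi] with t (ht : 0 < t) s _
    simp only [mul_assoc]
    exact ((((hasDerivAt_id s).sub_const 1).const_rpow ht).mul_const _).congr_deriv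
      (by simp only [id, pow_succ]; ring)

lemma gammaLogMoment_zero {c a : ℝ} (hc : 0 < c) (ha : 0 < a) :
    gammaLogMoment 0 c a = Gamma a / c ^ a := by
  simp only [gammaLogMoment, pow_zero, mul_one]
  rw [integral_rpow_mul_exp_neg_mul_Ioi ha hc, div_rpow zero_le_one hc.le, one_rpow]
  ring

lemma hasDerivAt_Gamma {a : ℝ} (ha : 0 < a) : HasDerivAt Gamma (Gamma a * digamma a) a := by
  rw [digamma, mul_div_cancel₀ _ (Gamma_pos_of_pos ha).ne']
  exact ((differentiableOn_Gamma_Ioi a ha).differentiableAt (Ioi_mem_nhds ha)).hasDerivAt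

lemma hasDerivAt_log_Gamma_s11 {a : ℝ} (ha : 0 < a) :
    HasDerivAt (fun x => log (Gamma x)) (digamma a) a := by
  have hΓ := (Gamma_pos_of_pos ha).ne'
  simpa [mul_div_cancel_left₀ _ hΓ] using (hasDerivAt_Gamma ha).log hΓ

lemma differentiableAt_digamma {a : ℝ} (ha : 0 < a) : DifferentiableAt ℝ digamma a := by
  have hΓ : Gamma =ᶠ[𝓝 a] gammaLogMoment 0 1 := by
    filter_upwards [Ioi_mem_nhds ha] with x hx
    rw [gammaLogMoment_zero one_pos hx, one_rpow, div_one]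
  have hψ : (fun x => gammaLogMoment 1 1 x / Gamma x) =ᶠ[𝓝 a] digamma := by
    filter_upwards [hΓ.eventuallyEq_nhds, Ioi_mem_nhds ha] with x hx (hx' : 0 < x)
    rw [digamma, hx.deriv_eq, (hasDerivAt_gammaLogMoment 0 one_pos hx').deriv]
  exact ((hasDerivAt_gammaLogMoment 1 one_pos ha).differentiableAt.div
    (hasDerivAt_Gamma ha).differentiableAt (Gamma_pos_of_pos ha).ne').congr_of_eventuallyEq hψ.symm

lemma hasDerivAt_Gamma_div_rpow {c a : ℝ} (hc : 0 < c) (ha : 0 < a) :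
    HasDerivAt (fun x => Gamma x / c ^ x) (Gamma a / c ^ a * (digamma a - log c)) a := by
  refine ((hasDerivAt_Gamma ha).fun_div (hasStrictDerivAt_const_rpow hc a).hasDerivAt
    (rpow_pos_of_pos hc a).ne').congr_deriv ?_
  field_simp

lemma gammaLogMoment_one {c a : ℝ} (hc : 0 < c) (ha : 0 < a) :
    gammaLogMoment 1 c a = Gamma a / c ^ a * (digamma a - log c) := by
  refine (hasDerivAt_gammaLogMoment 0 hc ha).unique
    ((hasDerivAt_Gamma_div_rpow hc ha).congr_of_eventuallyEq ?_)
  filter_upwards [Ioi_mem_nhds ha] with x hx using gammaLogMoment_zero hc hx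

lemma gammaLogMoment_two {c a : ℝ} (hc : 0 < c) (ha : 0 < a) :
    gammaLogMoment 2 c a = Gamma a / c ^ a * ((digamma a - log c) ^ 2 + trigamma a) := by
  have hψ : HasDerivAt digamma (trigamma a) a := (differentiableAt_digamma ha).hasDerivAt
  refine (hasDerivAt_gammaLogMoment 1 hc ha).unique
    (((hasDerivAt_Gamma_div_rpow hc ha).mul (hψ.sub_const (log c))).congr_of_eventuallyEq ?_
      |>.congr_deriv (by ring))
  filter_upwards [Ioi_mem_nhds ha] with x hx using gammaLogMoment_one hc hx

lemma digamma_add_one {a : ℝ} (ha : 0 < a) : digamma (a + 1) = digamma a + 1 / a := by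
  have hrec : HasDerivAt (fun x => Gamma (x + 1)) (Gamma a + a * (Gamma a * digamma a)) a := by
    refine (((hasDerivAt_id a).mul (hasDerivAt_Gamma ha)).congr_of_eventuallyEq ?_).congr_deriv
      (by simp)
    filter_upwards [Ioi_mem_nhds ha] with x hx using Gamma_add_one hx.ne'
  have hshift := (hasDerivAt_Gamma (by linarith : 0 < a + 1)).comp_add_const a 1
  have key := hshift.unique hrec
  rw [Gamma_add_one ha.ne'] at key
  have hΓ := (Gamma_pos_of_pos ha).ne'
  field_simp
  exact mul_left_cancel₀ hΓ (by linear_combination key)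

section GammaDensity

variable {a c : ℝ}

lemma pow_mul_log_pow_mul_gammaPDFReal (j k : ℕ) {t : ℝ} (ht : 0 < t) :
    t ^ j * log t ^ k * gammaPDFReal a c t
      = c ^ a / Gamma a * (t ^ (a + j - 1) * exp (-(c * t)) * log t ^ k) := by
  rw [gammaPDFReal, if_pos ht.le, add_sub_right_comm, rpow_add ht, rpow_natCast]
  ring

lemma integrableOn_pow_mul_log_pow_mul_gammaPDFReal (ha : 0 < a) (hc : 0 < c) (j k : ℕ) :
    IntegrableOn (fun t => t ^ j * log t ^ k * gammaPDFReal a c t) (Ioi 0) :=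
  IntegrableOn.congr_fun ((integrableOn_rpow_mul_exp_neg_mul_mul_log_pow
    (by positivity : 0 < a + j) hc k).const_mul (c ^ a / Gamma a))
    (fun _ ht => (pow_mul_log_pow_mul_gammaPDFReal j k ht).symm) measurableSet_Ioi

lemma integral_pow_mul_log_pow_mul_gammaPDFReal (j k : ℕ) :
    ∫ t in Ioi 0, t ^ j * log t ^ k * gammaPDFReal a c t
      = c ^ a / Gamma a * gammaLogMoment k c (a + j) := by
  rw [setIntegral_congr_fun measurableSet_Ioi
    (fun _ ht => pow_mul_log_pow_mul_gammaPDFReal j k ht), integral_const_mul, gammaLogMoment]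

lemma integral_affine_mul_affine_mul_gammaPDFReal (ha : 0 < a) (hc : 0 < c)
    (p q r p' q' r' k : ℝ) :
    ∫ t in Ioi 0, ((p + q * log t + r * t) * (p' + q' * log t + r' * t) + k) * gammaPDFReal a c t
      = (p + q * (digamma a - log c) + r * (a / c)) * (p' + q' * (digamma a - log c) + r' * (a / c))
        + q * q' * trigamma a + (q * r' + r * q') / c + r * r' * a / c ^ 2 + k := by
  set m : ℕ → ℕ → ℝ → ℝ := fun j k t => t ^ j * log t ^ k * gammaPDFReal a c t with hm
  have hI : ∀ j k, Integrable (m j k) (volume.restrict (Ioi 0)) :=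
    integrableOn_pow_mul_log_pow_mul_gammaPDFReal ha hc
  have hexpand : ∀ t,
      ((p + q * log t + r * t) * (p' + q' * log t + r' * t) + k) * gammaPDFReal a c t
      = (p * p' + k) * m 0 0 t + (p * q' + q * p') * m 0 1 t + q * q' * m 0 2 t
        + (p * r' + r * p') * m 1 0 t + (q * r' + r * q') * m 1 1 t + r * r' * m 2 0 t := by
    intro t; simp only [hm]; ring
  simp only [hexpand]
  rw [integral_add (by fun_prop) (by fun_prop), integral_add (by fun_prop) (by fun_prop),
    integral_add (by fun_prop) (by fun_prop), integral_add (by fun_prop) (by fun_prop),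
    integral_add (by fun_prop) (by fun_prop)]
  simp only [integral_const_mul, hm, integral_pow_mul_log_pow_mul_gammaPDFReal, Nat.cast_zero,
    add_zero, Nat.cast_one, Nat.cast_ofNat]
  have h₁ : 0 < a + 1 := by linarith
  rw [show a + 2 = a + 1 + 1 by ring, gammaLogMoment_zero hc ha, gammaLogMoment_one hc ha,
    gammaLogMoment_two hc ha, gammaLogMoment_zero hc h₁, gammaLogMoment_one hc h₁,
    gammaLogMoment_zero hc (by linarith), Gamma_add_one h₁.ne', Gamma_add_one ha.ne',
    digamma_add_one ha]
  simp only [rpow_add_one hc.ne']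
  have := (Gamma_pos_of_pos ha).ne'
  have := (rpow_pos_of_pos hc a).ne'
  field_simp
  ring

end GammaDensity

lemma integral_Ioi_comp_sub_right {E : Type*} [NormedAddCommGroup E] [NormedSpace ℝ E]
    (f : ℝ → E) (x : ℝ) : ∫ y in Ioi x, f (y - x) = ∫ v in Ioi 0, f v := by
  have := (measurePreserving_sub_right volume x).setIntegral_preimage_emb
    (MeasurableEquiv.subRight x).measurableEmbedding f (Ioi 0)
  rwa [preimage_sub_const_Ioi, zero_add] at this

section McKay

variable {α₁ c α₂ x y : ℝ}

lemma mckayPDF_eq_mul (hc : 0 < c) (hx : 0 ≤ x) (hxy : x ≤ y) :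
    mckayPDF α₁ c α₂ x y = gammaPDFReal α₁ c x * gammaPDFReal α₂ c (y - x) := by
  rw [mckayPDF, gammaPDFReal, gammaPDFReal, if_pos hx, if_pos (sub_nonneg.mpr hxy),
    rpow_add hc, show c * y = c * x + c * (y - x) by ring, neg_add, exp_add]
  ring

lemma log_mckayPDF (h₁ : 0 < α₁) (hc : 0 < c) (h₂ : 0 < α₂) (hx : 0 < x) (hxy : x < y) :
    log (mckayPDF α₁ c α₂ x y) = (α₁ + α₂) * log c + (α₁ - 1) * log x
      + (α₂ - 1) * log (y - x) - c * y - log (Gamma α₁) - log (Gamma α₂) := by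
  have hyx : 0 < y - x := sub_pos.mpr hxy
  have := Gamma_pos_of_pos h₁
  have := Gamma_pos_of_pos h₂
  rw [mckayPDF, log_div (by positivity) (by positivity), log_mul (by positivity) (by positivity),
    log_mul (by positivity) (by positivity), log_mul (by positivity) (by positivity),
    log_mul (by positivity) (by positivity), log_rpow hc, log_rpow hx, log_rpow hyx, log_exp]
  ring

lemma deriv_log_mckayPDF_shape₁ (h₁ : 0 < α₁) (hc : 0 < c) (h₂ : 0 < α₂) (hx : 0 < x)
    (hxy : x < y) :
    deriv (fun a => log (mckayPDF a c α₂ x y)) α₁ = log c + log x - digamma α₁ := by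
  refine ((((hasDerivAt_id' α₁).mul_const (log c + log x)).fun_sub
    (hasDerivAt_log_Gamma_s11 h₁)).add_const
    (α₂ * log c - log x + (α₂ - 1) * log (y - x) - c * y - log (Gamma α₂))
    |>.congr_of_eventuallyEq ?_).deriv.trans (by simp)
  filter_upwards [Ioi_mem_nhds h₁] with a ha
  rw [log_mckayPDF ha hc h₂ hx hxy]
  ring

lemma deriv_log_mckayPDF_rate (h₁ : 0 < α₁) (hc : 0 < c) (h₂ : 0 < α₂) (hx : 0 < x)
    (hxy : x < y) :
    deriv (fun s => log (mckayPDF α₁ s α₂ x y)) c = (α₁ + α₂) / c - y := by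
  refine ((((hasDerivAt_log hc.ne').const_mul (α₁ + α₂)).fun_sub
    ((hasDerivAt_id' c).mul_const y)).add_const
    ((α₁ - 1) * log x + (α₂ - 1) * log (y - x) - log (Gamma α₁) - log (Gamma α₂))
    |>.congr_of_eventuallyEq ?_).deriv.trans (by simp [div_eq_mul_inv])
  filter_upwards [Ioi_mem_nhds hc] with s hs
  rw [log_mckayPDF h₁ hs h₂ hx hxy]
  ring

lemma deriv_log_mckayPDF_shape₂ (h₁ : 0 < α₁) (hc : 0 < c) (h₂ : 0 < α₂) (hx : 0 < x)
    (hxy : x < y) :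
    deriv (fun b => log (mckayPDF α₁ c b x y)) α₂ = log c + log (y - x) - digamma α₂ := by
  refine ((((hasDerivAt_id' α₂).mul_const (log c + log (y - x))).fun_sub
    (hasDerivAt_log_Gamma_s11 h₂)).add_const
    (α₁ * log c + (α₁ - 1) * log x - log (y - x) - c * y - log (Gamma α₁))
    |>.congr_of_eventuallyEq ?_).deriv.trans (by simp)
  filter_upwards [Ioi_mem_nhds h₂] with b hb
  rw [log_mckayPDF h₁ hc hb hx hxy]
  ring

lemma integral_mul_mckayPDF (hc : 0 < c) (hx : 0 ≤ x) (f : ℝ → ℝ) :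
    ∫ y in Ioi x, f y * mckayPDF α₁ c α₂ x y
      = (∫ v in Ioi 0, f (x + v) * gammaPDFReal α₂ c v) * gammaPDFReal α₁ c x := by
  rw [← integral_mul_const, ← integral_Ioi_comp_sub_right
    (fun v => f (x + v) * gammaPDFReal α₂ c v * gammaPDFReal α₁ c x)]
  refine setIntegral_congr_fun measurableSet_Ioi fun y (hxy : x < y) => ?_
  rw [mckayPDF_eq_mul hc hx hxy.le, add_sub_cancel]
  ring

noncomputable def mckayAffine (u₀ u₁ u₂ u₃ u₄ x y : ℝ) : ℝ :=
  u₀ + u₁ * log x + u₂ * x + u₃ * log (y - x) + u₄ * (y - x)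

theorem integral_mul_mul_mckayPDF (h₁ : 0 < α₁) (hc : 0 < c) (h₂ : 0 < α₂) {U W : ℝ → ℝ → ℝ}
    {u₀ u₁ u₂ u₃ u₄ w₀ w₁ w₂ w₃ w₄ : ℝ}
    (hU : ∀ x y, 0 < x → x < y → U x y = mckayAffine u₀ u₁ u₂ u₃ u₄ x y)
    (hW : ∀ x y, 0 < x → x < y → W x y = mckayAffine w₀ w₁ w₂ w₃ w₄ x y) :
    ∫ x in Ioi 0, ∫ y in Ioi x, U x y * W x y * mckayPDF α₁ c α₂ x y
      = (u₀ + u₁ * (digamma α₁ - log c) + u₂ * (α₁ / c) + u₃ * (digamma α₂ - log c)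
            + u₄ * (α₂ / c))
          * (w₀ + w₁ * (digamma α₁ - log c) + w₂ * (α₁ / c) + w₃ * (digamma α₂ - log c)
            + w₄ * (α₂ / c))
        + u₁ * w₁ * trigamma α₁ + (u₁ * w₂ + u₂ * w₁) / c + u₂ * w₂ * α₁ / c ^ 2
        + u₃ * w₃ * trigamma α₂ + (u₃ * w₄ + u₄ * w₃) / c + u₄ * w₄ * α₂ / c ^ 2 := by
  set P := u₀ + u₃ * (digamma α₂ - log c) + u₄ * (α₂ / c)
  set Q := w₀ + w₃ * (digamma α₂ - log c) + w₄ * (α₂ / c)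
  set K := u₃ * w₃ * trigamma α₂ + (u₃ * w₄ + u₄ * w₃) / c + u₄ * w₄ * α₂ / c ^ 2
  have inner : ∀ x ∈ Ioi (0 : ℝ), ∫ y in Ioi x, U x y * W x y * mckayPDF α₁ c α₂ x y
      = ((P + u₁ * log x + u₂ * x) * (Q + w₁ * log x + w₂ * x) + K) * gammaPDFReal α₁ c x := by
    intro x (hx : 0 < x)
    have hintegrand : ∀ v ∈ Ioi (0 : ℝ), U x (x + v) * W x (x + v) * gammaPDFReal α₂ c v
        = ((u₀ + u₁ * log x + u₂ * x + u₃ * log v + u₄ * v)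
          * (w₀ + w₁ * log x + w₂ * x + w₃ * log v + w₄ * v) + 0) * gammaPDFReal α₂ c v := by
      intro v (hv : 0 < v)
      rw [hU x _ hx (by linarith), hW x _ hx (by linarith), mckayAffine, mckayAffine,
        add_sub_cancel_left, add_zero]
    rw [integral_mul_mckayPDF hc hx.le, setIntegral_congr_fun measurableSet_Ioi hintegrand,
      integral_affine_mul_affine_mul_gammaPDFReal h₂ hc]
    ring
  rw [setIntegral_congr_fun measurableSet_Ioi inner,
    integral_affine_mul_affine_mul_gammaPDFReal h₁ hc]
  ring

end McKay

theorem mckay_fisher_info (α₁ c α₂ : ℝ) (h₁ : 0 < α₁) (hc : 0 < c) (h₂ : 0 < α₂) :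
    (∫ x in Set.Ioi (0 : ℝ), ∫ y in Set.Ioi x,
        (deriv (fun a => Real.log (mckayPDF a c α₂ x y)) α₁) ^ 2 *
          mckayPDF α₁ c α₂ x y) = trigamma α₁ ∧
    (∫ x in Set.Ioi (0 : ℝ), ∫ y in Set.Ioi x,
        (deriv (fun a => Real.log (mckayPDF a c α₂ x y)) α₁) *
          (deriv (fun s => Real.log (mckayPDF α₁ s α₂ x y)) c) *
          mckayPDF α₁ c α₂ x y) = -(1 / c) ∧
    (∫ x in Set.Ioi (0 : ℝ), ∫ y in Set.Ioi x,
        (deriv (fun a => Real.log (mckayPDF a c α₂ x y)) α₁) *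
          (deriv (fun b => Real.log (mckayPDF α₁ c b x y)) α₂) *
          mckayPDF α₁ c α₂ x y) = 0 ∧
    (∫ x in Set.Ioi (0 : ℝ), ∫ y in Set.Ioi x,
        (deriv (fun s => Real.log (mckayPDF α₁ s α₂ x y)) c) ^ 2 *
          mckayPDF α₁ c α₂ x y) = (α₁ + α₂) / c ^ 2 ∧
    (∫ x in Set.Ioi (0 : ℝ), ∫ y in Set.Ioi x,
        (deriv (fun s => Real.log (mckayPDF α₁ s α₂ x y)) c) *
          (deriv (fun b => Real.log (mckayPDF α₁ c b x y)) α₂) *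
          mckayPDF α₁ c α₂ x y) = -(1 / c) ∧
    (∫ x in Set.Ioi (0 : ℝ), ∫ y in Set.Ioi x,
        (deriv (fun b => Real.log (mckayPDF α₁ c b x y)) α₂) ^ 2 *
          mckayPDF α₁ c α₂ x y) = trigamma α₂ := by
  have s₁ : ∀ x y, 0 < x → x < y → deriv (fun a => log (mckayPDF a c α₂ x y)) α₁
      = mckayAffine (log c - digamma α₁) 1 0 0 0 x y := fun x y hx hxy => by
    rw [deriv_log_mckayPDF_shape₁ h₁ hc h₂ hx hxy, mckayAffine]; ring
  have s₂ : ∀ x y, 0 < x → x < y → deriv (fun s => log (mckayPDF α₁ s α₂ x y)) c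
      = mckayAffine ((α₁ + α₂) / c) 0 (-1) 0 (-1) x y := fun x y hx hxy => by
    rw [deriv_log_mckayPDF_rate h₁ hc h₂ hx hxy, mckayAffine]; ring
  have s₃ : ∀ x y, 0 < x → x < y → deriv (fun b => log (mckayPDF α₁ c b x y)) α₂
      = mckayAffine (log c - digamma α₂) 0 0 1 0 x y := fun x y hx hxy => by
    rw [deriv_log_mckayPDF_shape₂ h₁ hc h₂ hx hxy, mckayAffine]; ring
  simp only [sq]
  refine ⟨?_, ?_, ?_, ?_, ?_, ?_⟩
  · rw [integral_mul_mul_mckayPDF h₁ hc h₂ s₁ s₁]; ring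
  · rw [integral_mul_mul_mckayPDF h₁ hc h₂ s₁ s₂]; ring
  · rw [integral_mul_mul_mckayPDF h₁ hc h₂ s₁ s₃]; ring
  · rw [integral_mul_mul_mckayPDF h₁ hc h₂ s₂ s₂]; ring
  · rw [integral_mul_mul_mckayPDF h₁ hc h₂ s₂ s₃]; ring
  · rw [integral_mul_mul_mckayPDF h₁ hc h₂ s₃ s₃]; ring
end
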